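/- arXiv:2404.14534 — 2 statements merged into one kernel-verified Lean document; each statement's English description precedes it below -/
import Mathlib

section
/- Under the logistic selection model P(R=1|X=x) = logistic(ψ₀+ψ₁x) with X | R=1 ~ N(μ,σ²), the conditional density of X given R=r (for r ∈ {0,1}) satisfies f(x | R=r) = f(x | R=1) · exp((x−μ)ψ₁(r−1) − ½ψ₁²(r−1)²σ²). -/
open MeasureTheory Real

noncomputable def normalPDF (μ σ2 x : ℝ) : ℝ :=
  (Real.sqrt (2 * Real.pi * σ2))⁻¹ * Real.exp (-(x - μ)^2 / (2 * σ2))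

noncomputable def logisticSel (ψ0 ψ1 x : ℝ) : ℝ :=
  Real.exp (ψ0 + ψ1 * x) / (1 + Real.exp (ψ0 + ψ1 * x))

/-- Bernoulli weight: `P(R=r|X=x)` for r ∈ {0,1}. -/
noncomputable def selWeight (ψ0 ψ1 : ℝ) (r x : ℝ) : ℝ :=
  if r = 1 then logisticSel ψ0 ψ1 x else 1 - logisticSel ψ0 ψ1 x

/-!
Bayes' rule gives `f(x|R=0) ∝ f(x|R=1) · P(R=0|x) / P(R=1|x)`, and the logistic odds
`P(R=0|x) / P(R=1|x) = e^{-(ψ₀+ψ₁x)}` are an exponential tilt. Completing the square, a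
tilted `N(μ, σ²)` density is a multiple of the `N(μ - ψ₁σ², σ²)` density, so normalising
gives `f(x|R=0) = φ_{μ-ψ₁σ²,σ²}(x)`, which is the claimed formula read backwards.
-/

open ProbabilityTheory NNReal

lemma normalPDF_eq_gaussianPDFReal (μ : ℝ) (v : ℝ≥0) (x : ℝ) :
    normalPDF μ v x = gaussianPDFReal μ v x := by
  simp [normalPDF, gaussianPDFReal]

lemma integral_normalPDF (μ : ℝ) {σ2 : ℝ} (hσ2 : 0 < σ2) : ∫ x, normalPDF μ σ2 x = 1 := by
  lift σ2 to ℝ≥0 using hσ2.le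
  simp only [normalPDF_eq_gaussianPDFReal]
  exact integral_gaussianPDFReal_eq_one μ (by exact_mod_cast hσ2.ne')

lemma normalPDF_add_mul (μ σ2 t x : ℝ) :
    normalPDF (μ + t * σ2) σ2 x = normalPDF μ σ2 x * exp (t * (x - μ) - t ^ 2 * σ2 / 2) := by
  rcases eq_or_ne σ2 0 with rfl | hσ2
  · simp [normalPDF]
  have hexponent : -(x - (μ + t * σ2)) ^ 2 / (2 * σ2) =
      -(x - μ) ^ 2 / (2 * σ2) + (t * (x - μ) - t ^ 2 * σ2 / 2) := by
    field_simp
    ring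
  rw [normalPDF, normalPDF, hexponent, exp_add, ← mul_assoc]

lemma div_integral_eq_normalPDF {g : ℝ → ℝ} {K m σ2 : ℝ} (hσ2 : 0 < σ2) (hK : K ≠ 0)
    (hg : ∀ x, g x = K * normalPDF m σ2 x) (x : ℝ) :
    g x / ∫ y, g y = normalPDF m σ2 x := by
  simp only [hg, integral_const_mul, integral_normalPDF m hσ2, mul_one]
  field_simp

lemma selWeight_zero_eq_mul_exp (ψ0 ψ1 x : ℝ) :
    selWeight ψ0 ψ1 0 x = selWeight ψ0 ψ1 1 x * exp (-(ψ0 + ψ1 * x)) := by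
  simp only [selWeight, zero_ne_one, if_true, if_false, logisticSel, exp_neg]
  field_simp
  ring

theorem conditional_density_tilting_general
    (f : ℝ → ℝ) (μ σ2 ψ0 ψ1 : ℝ) (hσ2 : 0 < σ2)
    (P : ℝ → ℝ)
    (hP : ∀ r, P r = ∫ x, selWeight ψ0 ψ1 r x * f x)
    (hPpos : ∀ r, r = 0 ∨ r = 1 → 0 < P r)
    (hcond1 : ∀ x, selWeight ψ0 ψ1 1 x * f x / P 1 = normalPDF μ σ2 x) :
    ∀ r : ℝ, r = 0 ∨ r = 1 → ∀ x,
      selWeight ψ0 ψ1 r x * f x / P r =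
        normalPDF μ σ2 x *
          Real.exp ((x - μ) * ψ1 * (r - 1) - ψ1 ^ 2 * (r - 1) ^ 2 * σ2 / 2) := by
  have hP1 : P 1 ≠ 0 := (hPpos 1 (Or.inr rfl)).ne'
  have hjoint1 (x : ℝ) : selWeight ψ0 ψ1 1 x * f x = P 1 * normalPDF μ σ2 x := by
    rw [← hcond1 x, mul_div_cancel₀ _ hP1]
  have hjoint0 (x : ℝ) : selWeight ψ0 ψ1 0 x * f x =
      P 1 * exp (-(ψ0 + ψ1 * μ) + ψ1 ^ 2 * σ2 / 2) * normalPDF (μ + -ψ1 * σ2) σ2 x := by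
    rw [selWeight_zero_eq_mul_exp, mul_right_comm, hjoint1, normalPDF_add_mul,
      show -(ψ0 + ψ1 * x) = (-(ψ0 + ψ1 * μ) + ψ1 ^ 2 * σ2 / 2)
        + (-ψ1 * (x - μ) - (-ψ1) ^ 2 * σ2 / 2) by ring, exp_add]
    ring
  rintro r (rfl | rfl) x
  · rw [hP 0, div_integral_eq_normalPDF hσ2 (mul_ne_zero hP1 (exp_pos _).ne') hjoint0,
      normalPDF_add_mul]
    ring_nf
  · rw [hcond1]
    simp

/-- under logistic selection with `X|R=1 ~ N(μ,σ²)`,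
`f(x|R=r) = f(x|R=1) · exp((x−μ)ψ₁(r−1) − ½ψ₁²(r−1)²σ²)` for r ∈ {0,1}. -/
theorem conditional_density_tilting
    (f : ℝ → ℝ) (μ σ2 ψ0 ψ1 : ℝ) (hσ2 : 0 < σ2)
    (hf_nonneg : ∀ x, 0 ≤ f x) (hf_meas : Measurable f) (hInt : Integrable f)
    (P : ℝ → ℝ)
    (hP : ∀ r, P r = ∫ x, selWeight ψ0 ψ1 r x * f x)
    (hPpos : ∀ r, r = 0 ∨ r = 1 → 0 < P r)
    (hcond1 : ∀ x, selWeight ψ0 ψ1 1 x * f x / P 1 = normalPDF μ σ2 x) :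
    ∀ r : ℝ, r = 0 ∨ r = 1 → ∀ x,
      selWeight ψ0 ψ1 r x * f x / P r =
        normalPDF μ σ2 x *
          Real.exp ((x - μ) * ψ1 * (r - 1) - ψ1 ^ 2 * (r - 1) ^ 2 * σ2 / 2) :=
  conditional_density_tilting_general f μ σ2 ψ0 ψ1 hσ2 P hP hPpos hcond1
end

section
/- Suppose X | R=1 has density g with MGF finite at −ψ₁, and P(R=1|X=x) = logistic(ψ₀+ψ₁x). Then E[X | R=0] = M'(−ψ₁)/M(−ψ₁), where M(t) = ∫ e^{tx} g(x) dx is the MGF of X given R=1, assuming M is differentiable at −ψ₁. -/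
/-!
Bayes' rule makes the missing-data density an exponential tilt of the observed one:
`(1 - π(x)) f(x) = e^{-ψ₀} P₁ e^{-ψ₁x} g(x)`. Hence `P₀ = e^{-ψ₀} P₁ M(-ψ₁)` and
`E[X | R=0] = ∫ x e^{-ψ₁x} g(x) dx / M(-ψ₁)`. The numerator is `M'(-ψ₁)`: `M` is the MGF of the
identity under the measure `g(x) dx`, and `-ψ₁` lies in the interior of its domain of
integrability because `M(-ψ₁) ≠ 0` and `M` is continuous there, so `M` can be differentiated under
the integral sign.
-/

open MeasureTheory Real

lemma logisticSel_nonneg (ψ0 ψ1 x : ℝ) : 0 ≤ logisticSel ψ0 ψ1 x := by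
  unfold logisticSel; positivity

lemma continuous_logisticSel (ψ0 ψ1 : ℝ) : Continuous (logisticSel ψ0 ψ1) := by
  unfold logisticSel
  fun_prop (disch := intro x; positivity)

lemma one_sub_logisticSel (ψ0 ψ1 x : ℝ) :
    1 - logisticSel ψ0 ψ1 x = exp (-ψ0) * exp (-ψ1 * x) * logisticSel ψ0 ψ1 x := by
  have hpos : 0 < 1 + exp (ψ0 + ψ1 * x) := by positivity
  have hinv : exp (-ψ0) * exp (-ψ1 * x) * exp (ψ0 + ψ1 * x) = 1 := by
    rw [← exp_add, ← exp_add]; ring_nf; exact exp_zero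
  rw [logisticSel, mul_div_assoc', hinv, one_sub_div hpos.ne', add_sub_cancel_right]

lemma mem_interior_setOf_integrable_of_continuousAt {T α E : Type*} [TopologicalSpace T]
    [MeasurableSpace α] [NormedAddCommGroup E] [NormedSpace ℝ E] {μ : Measure α}
    {F : T → α → E} {t₀ : T} (hF : ContinuousAt (fun t ↦ ∫ a, F t a ∂μ) t₀)
    (h₀ : ∫ a, F t₀ a ∂μ ≠ 0) : t₀ ∈ interior {t | Integrable (F t) μ} := by
  rw [mem_interior_iff_mem_nhds]
  filter_upwards [hF.eventually_ne h₀] with t ht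
  -- a non-integrable function has Bochner integral `0`
  by_contra h
  exact ht (integral_undef h)

lemma hasDerivAt_integral_exp_mul_mul {μ : Measure ℝ} {g : ℝ → ℝ} (hg : ∀ x, 0 ≤ g x)
    (hgm : Measurable g) {t : ℝ}
    (ht : t ∈ interior {s | Integrable (fun x ↦ exp (s * x) * g x) μ}) :
    HasDerivAt (fun s ↦ ∫ x, exp (s * x) * g x ∂μ) (∫ x, x * (exp (t * x) * g x) ∂μ) t := by
  have hgm' : Measurable fun x ↦ (g x).toNNReal := hgm.real_toNNReal
  set ν := μ.withDensity fun x ↦ ((g x).toNNReal : ENNReal)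
  have hcoe : ∀ x, ((g x).toNNReal : ℝ) = g x := fun x ↦ Real.coe_toNNReal _ (hg x)
  have hintegrable : ∀ h : ℝ → ℝ, Integrable h ν ↔ Integrable (fun x ↦ h x * g x) μ := by
    intro h
    rw [integrable_withDensity_iff_integrable_smul hgm']
    simp only [NNReal.smul_def, smul_eq_mul, hcoe, mul_comm]
  have hintegral : ∀ h : ℝ → ℝ, ∫ x, h x ∂ν = ∫ x, h x * g x ∂μ := by
    intro h
    rw [integral_withDensity_eq_integral_smul hgm']
    simp only [NNReal.smul_def, smul_eq_mul, hcoe, mul_comm]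
  have hset : ProbabilityTheory.integrableExpSet id ν =
      {s | Integrable (fun x ↦ exp (s * x) * g x) μ} := by
    ext s; exact hintegrable _
  have hmgf : ProbabilityTheory.mgf id ν = fun s ↦ ∫ x, exp (s * x) * g x ∂μ := by
    funext s; exact hintegral _
  have hderiv := ProbabilityTheory.hasDerivAt_mgf (hset ▸ ht)
  rw [hmgf, hintegral] at hderiv
  simpa only [id, mul_assoc] using hderiv

theorem missing_mean_via_mgf_general
    (f g : ℝ → ℝ) (ψ0 ψ1 : ℝ)
    (hf_nonneg : ∀ x, 0 ≤ f x) (hf_meas : Measurable f)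
    (P1 P0 : ℝ)
    (hP0 : P0 = ∫ x, (1 - logisticSel ψ0 ψ1 x) * f x)
    (hP1pos : 0 < P1) (hP0pos : 0 < P0)
    (hg : ∀ x, g x = logisticSel ψ0 ψ1 x * f x / P1)
    (M : ℝ → ℝ)
    (hM : ∀ t, M t = ∫ x, Real.exp (t * x) * g x)
    (M' : ℝ)
    (hM' : HasDerivAt M M' (-ψ1)) :
    (∫ x, x * ((1 - logisticSel ψ0 ψ1 x) * f x / P0)) = M' / M (-ψ1) := by
  have hM_eq : M = fun t ↦ ∫ x, exp (t * x) * g x := funext hM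
  have hg_nonneg : ∀ x, 0 ≤ g x := fun x ↦ by
    rw [hg]; have := logisticSel_nonneg ψ0 ψ1 x; have := hf_nonneg x; positivity
  have hg_meas : Measurable g := by
    rw [funext hg]; exact ((continuous_logisticSel ψ0 ψ1).measurable.mul hf_meas).div_const P1
  have hmissing : ∀ x, (1 - logisticSel ψ0 ψ1 x) * f x
      = exp (-ψ0) * P1 * (exp (-ψ1 * x) * g x) := fun x ↦ by
    rw [one_sub_logisticSel, hg]; field_simp
  have hP0_eq : P0 = exp (-ψ0) * P1 * M (-ψ1) := by
    rw [hP0, hM, ← integral_const_mul]; simp only [hmissing]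
  have hM_ne : M (-ψ1) ≠ 0 := fun h ↦ hP0pos.ne' (by rw [hP0_eq, h, mul_zero])
  have hderiv : M' = ∫ x, x * (exp (-ψ1 * x) * g x) := by
    refine hM'.unique ?_
    rw [hM_eq] at hM' hM_ne ⊢
    exact hasDerivAt_integral_exp_mul_mul hg_nonneg hg_meas
      (mem_interior_setOf_integrable_of_continuousAt hM'.continuousAt hM_ne)
  calc (∫ x, x * ((1 - logisticSel ψ0 ψ1 x) * f x / P0))
      = exp (-ψ0) * P1 / P0 * ∫ x, x * (exp (-ψ1 * x) * g x) := by
        rw [← integral_const_mul]; congr 1; funext x; rw [hmissing]; ring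
    _ = M' / M (-ψ1) := by
        rw [← hderiv, hP0_eq]; field_simp

/-- `E[X|R=0] = M'(−ψ₁)/M(−ψ₁)`, where `M` is the MGF of
`X` given `R=1`, under the logistic selection model. -/
theorem missing_mean_via_mgf
    (f g : ℝ → ℝ) (ψ0 ψ1 : ℝ)
    (hf_nonneg : ∀ x, 0 ≤ f x) (hf_meas : Measurable f) (hInt : Integrable f)
    (P1 P0 : ℝ)
    (hP1 : P1 = ∫ x, logisticSel ψ0 ψ1 x * f x)
    (hP0 : P0 = ∫ x, (1 - logisticSel ψ0 ψ1 x) * f x)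
    (hP1pos : 0 < P1) (hP0pos : 0 < P0)
    (hg : ∀ x, g x = logisticSel ψ0 ψ1 x * f x / P1)
    (M : ℝ → ℝ)
    (hM : ∀ t, M t = ∫ x, Real.exp (t * x) * g x)
    (hMint : Integrable (fun x => Real.exp (-ψ1 * x) * g x))
    (M' : ℝ)
    (hM' : HasDerivAt M M' (-ψ1)) :
    (∫ x, x * ((1 - logisticSel ψ0 ψ1 x) * f x / P0)) = M' / M (-ψ1) :=
  missing_mean_via_mgf_general f g ψ0 ψ1 hf_nonneg hf_meas P1 P0 hP0 hP1pos hP0pos hg M hM M' hM'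
end
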